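/- Let p > 2, let U ⊂ ℝ² be open, let u : U → ℝ be twice differentiable at x_0 ∈ U with ∇u(x_0) ≠ 0, and suppose Δu(x_0) + (p-2) ⟨D²u(x_0) ∇u(x_0), ∇u(x_0)⟩ / |∇u(x_0)|² = 0. Let φ := (u_x − i u_y)/2 be the complex gradient, with Wirtinger derivatives φ_z = (φ_x − i φ_y)/2 and φ_{z̄} = (φ_x + i φ_y)/2. Then at x_0, |φ_{z̄}(x_0)| ≤ (1 − 2/p) |φ_z(x_0)|; that is, the complex gradient of a planar p-harmonic function satisfies the distortion inequality of a (p-1)-quasiregular mapping at every non-critical point. -/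

import Mathlib

open Real

noncomputable section

/-- Partial derivative of `u : ℝ² → ℝ` in the `x`-direction. -/
def ux (u : ℝ × ℝ → ℝ) (x : ℝ × ℝ) : ℝ := fderiv ℝ u x (1, 0)

/-- Partial derivative of `u : ℝ² → ℝ` in the `y`-direction. -/
def uy (u : ℝ × ℝ → ℝ) (x : ℝ × ℝ) : ℝ := fderiv ℝ u x (0, 1)

/-- The complex gradient `φ = ∂u/∂z = (u_x - i u_y)/2` of `u : ℝ² → ℝ`. -/
def complexGradient (u : ℝ × ℝ → ℝ) (x : ℝ × ℝ) : ℂ :=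
  ((ux u x : ℂ) - Complex.I * (uy u x : ℂ)) / 2

/-- The Wirtinger derivative `∂φ/∂z = (φ_x - i φ_y)/2` of `φ : ℝ² → ℂ`. -/
def wirtingerZ (φ : ℝ × ℝ → ℂ) (x : ℝ × ℝ) : ℂ :=
  (fderiv ℝ φ x (1, 0) - Complex.I * fderiv ℝ φ x (0, 1)) / 2

/-- The Wirtinger derivative `∂φ/∂z̄ = (φ_x + i φ_y)/2` of `φ : ℝ² → ℂ`. -/
def wirtingerZBar (φ : ℝ × ℝ → ℂ) (x : ℝ × ℝ) : ℂ :=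
  (fderiv ℝ φ x (1, 0) + Complex.I * fderiv ℝ φ x (0, 1)) / 2

/-- The second derivative `D²u(x)[v,w]` of `u : ℝ² → ℝ`. -/
def secondDeriv (u : ℝ × ℝ → ℝ) (x v w : ℝ × ℝ) : ℝ :=
  fderiv ℝ (fderiv ℝ u) x v w

/-- `u` is classically `p`-harmonic at `x₀` (where `∇u(x₀) ≠ 0`):
`Δu(x₀) + (p-2) ⟨D²u(x₀) ∇u(x₀), ∇u(x₀)⟩ / |∇u(x₀)|² = 0`. -/
def ClassicallyPHarmonicAt (p : ℝ) (u : ℝ × ℝ → ℝ) (x₀ : ℝ × ℝ) : Prop :=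
  (secondDeriv u x₀ (1, 0) (1, 0) + secondDeriv u x₀ (0, 1) (0, 1)) +
    (p - 2) * secondDeriv u x₀ (ux u x₀, uy u x₀) (ux u x₀, uy u x₀) /
      ((ux u x₀) ^ 2 + (uy u x₀) ^ 2) = 0

/-! Write `φ` for the complex gradient and `ζ = u_x + i u_y = 2 φ̄`. By symmetry of the Hessian,
`φ_z̄ = Δu / 4` is real, `φ_z = (u_xx - u_yy - 2i u_xy) / 4`, and
`⟨D²u ∇u, ∇u⟩ = 2 φ_z̄ |ζ|² + 2 Re (φ_z ζ²)`. Since `ζ² / |ζ|² = φ̄ / φ`, the equation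
`Δu + (p - 2) ⟨D²u ∇u, ∇u⟩ / |∇u|² = 0` becomes `p φ_z̄ = -(p - 2) Re ((φ̄ / φ) φ_z)`, and taking
absolute values with `|φ̄ / φ| = 1` gives `p |φ_z̄| ≤ (p - 2) |φ_z|`. -/

open Complex ComplexConjugate Filter Topology

theorem ContinuousLinearMap.bilin_apply_mk_mk (L : ℝ × ℝ →L[ℝ] ℝ × ℝ →L[ℝ] ℝ) (a b : ℝ) :
    L (a, b) (a, b) = a ^ 2 * L (1, 0) (1, 0) + a * b * (L (1, 0) (0, 1) + L (0, 1) (1, 0)) +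
      b ^ 2 * L (0, 1) (0, 1) := by
  have hab : ((a, b) : ℝ × ℝ) = a • ((1 : ℝ), (0 : ℝ)) + b • ((0 : ℝ), (1 : ℝ)) := by simp
  rw [hab]
  simp only [map_add, map_smul, add_apply, smul_apply, smul_eq_mul]
  ring

theorem norm_le_of_mul_eq_neg_re {p : ℝ} (hp : 2 ≤ p) {z w ξ : ℂ} (hξ : ‖ξ‖ ≤ 1)
    (h : (p : ℂ) * z = ((-(p - 2) * (ξ * w).re : ℝ) : ℂ)) : ‖z‖ ≤ (1 - 2 / p) * ‖w‖ := by
  have hp0 : 0 < p := by linarith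
  have hnorm : p * ‖z‖ = (p - 2) * |(ξ * w).re| := by
    have := congrArg norm h
    rwa [norm_mul, norm_real, norm_real, Real.norm_of_nonneg hp0.le, Real.norm_eq_abs, abs_mul,
      abs_neg, abs_of_nonneg (by linarith)] at this
  have hre : |(ξ * w).re| ≤ ‖w‖ :=
    calc |(ξ * w).re| ≤ ‖ξ‖ * ‖w‖ := (abs_re_le_norm _).trans (norm_mul _ _).le
      _ ≤ ‖w‖ := mul_le_of_le_one_left (norm_nonneg _) hξ
  rw [show (1 - 2 / p) * ‖w‖ = (p - 2) * ‖w‖ / p by field_simp, le_div_iff₀ hp0, mul_comm, hnorm]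
  exact mul_le_mul_of_nonneg_left hre (by linarith)

theorem norm_conj_div_self_le_one (z : ℂ) : ‖conj z / z‖ ≤ 1 := by
  rcases eq_or_ne z 0 with rfl | hz
  · simp
  · rw [norm_div, norm_conj, div_self (norm_ne_zero_iff.mpr hz)]

section

variable {u : ℝ × ℝ → ℝ} {x : ℝ × ℝ}

theorem secondDeriv_comm (hu : ∀ᶠ y in 𝓝 x, DifferentiableAt ℝ u y)
    (hu' : DifferentiableAt ℝ (fderiv ℝ u) x) (v w : ℝ × ℝ) :
    secondDeriv u x v w = secondDeriv u x w v :=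
  second_derivative_symmetric_of_eventually (hu.mono fun _ hy => hy.hasFDerivAt)
    hu'.hasFDerivAt v w

theorem fderiv_complexGradient_apply (hu : DifferentiableAt ℝ (fderiv ℝ u) x) (v : ℝ × ℝ) :
    fderiv ℝ (complexGradient u) x v =
      ((secondDeriv u x v (1, 0) : ℂ) - I * secondDeriv u x v (0, 1)) / 2 := by
  have hpartial (w : ℝ × ℝ) : HasFDerivAt (fun y => (fderiv ℝ u y w : ℂ))
      (ofRealCLM.comp ((ContinuousLinearMap.apply ℝ ℝ w).comp (fderiv ℝ (fderiv ℝ u) x))) x :=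
    ofRealCLM.hasFDerivAt.comp x
      ((ContinuousLinearMap.apply ℝ ℝ w).hasFDerivAt.comp x hu.hasFDerivAt)
  have hφ : HasFDerivAt (complexGradient u) _ x :=
    ((hpartial (1, 0)).sub ((hpartial (0, 1)).const_mul I)).mul_const (2⁻¹ : ℂ)
  rw [hφ.fderiv]
  simp only [smul_apply, sub_apply, ContinuousLinearMap.comp_apply,
    ContinuousLinearMap.apply_apply, ofRealCLM_apply, smul_eq_mul, secondDeriv]
  ring

theorem wirtingerZBar_complexGradient (hu : DifferentiableAt ℝ (fderiv ℝ u) x)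
    (hsymm : secondDeriv u x (0, 1) (1, 0) = secondDeriv u x (1, 0) (0, 1)) :
    wirtingerZBar (complexGradient u) x =
      ((secondDeriv u x (1, 0) (1, 0) + secondDeriv u x (0, 1) (0, 1)) / 4 : ℝ) := by
  rw [wirtingerZBar, fderiv_complexGradient_apply hu, fderiv_complexGradient_apply hu, hsymm]
  push_cast
  linear_combination (-(secondDeriv u x (0, 1) (0, 1) : ℂ) / 4) * I_sq

theorem wirtingerZ_complexGradient (hu : DifferentiableAt ℝ (fderiv ℝ u) x)
    (hsymm : secondDeriv u x (0, 1) (1, 0) = secondDeriv u x (1, 0) (0, 1)) :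
    wirtingerZ (complexGradient u) x =
      (secondDeriv u x (1, 0) (1, 0) - secondDeriv u x (0, 1) (0, 1) -
        2 * I * secondDeriv u x (1, 0) (0, 1)) / 4 := by
  rw [wirtingerZ, fderiv_complexGradient_apply hu, fderiv_complexGradient_apply hu, hsymm]
  linear_combination ((secondDeriv u x (0, 1) (0, 1) : ℂ) / 4) * I_sq

theorem normSq_complexGradient :
    normSq (complexGradient u x) = (ux u x ^ 2 + uy u x ^ 2) / 4 := by
  rw [complexGradient, normSq_div, normSq_ofNat,
    show (ux u x : ℂ) - I * uy u x = ux u x + (-uy u x : ℝ) * I by push_cast; ring,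
    normSq_add_mul_I]
  ring

theorem conj_complexGradient_div_self :
    conj (complexGradient u x) / complexGradient u x =
      ((ux u x ^ 2 - uy u x ^ 2 : ℝ) + (2 * ux u x * uy u x : ℝ) * I) /
        ((ux u x ^ 2 + uy u x ^ 2 : ℝ) : ℂ) := by
  have hinv : ((normSq (complexGradient u x) : ℝ) : ℂ)⁻¹ =
      4 * ((ux u x ^ 2 + uy u x ^ 2 : ℝ) : ℂ)⁻¹ := by
    rw [normSq_complexGradient, ofReal_div, inv_div, div_eq_mul_inv]
    push_cast
    ring
  rw [div_eq_mul_inv _ (complexGradient u x), inv_def, ofReal_inv, hinv, complexGradient]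
  simp only [map_div₀, map_sub, map_mul, conj_ofReal, conj_I, map_ofNat]
  push_cast
  linear_combination ((uy u x : ℂ) ^ 2 * ((ux u x : ℂ) ^ 2 + (uy u x : ℂ) ^ 2)⁻¹) * I_sq

theorem ClassicallyPHarmonicAt.mul_wirtingerZBar_complexGradient {p : ℝ}
    (hpde : ClassicallyPHarmonicAt p u x) (hu : DifferentiableAt ℝ (fderiv ℝ u) x)
    (hsymm : secondDeriv u x (0, 1) (1, 0) = secondDeriv u x (1, 0) (0, 1))
    (hgrad : (ux u x, uy u x) ≠ (0, 0)) :
    (p : ℂ) * wirtingerZBar (complexGradient u) x =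
      ((-(p - 2) * (conj (complexGradient u x) / complexGradient u x *
        wirtingerZ (complexGradient u) x).re : ℝ) : ℂ) := by
  have hr : ux u x ^ 2 + uy u x ^ 2 ≠ 0 := by
    rwa [sq, sq, Ne, mul_self_add_mul_self_eq_zero, ← Prod.mk.injEq]
  have hquad := (fderiv ℝ (fderiv ℝ u) x).bilin_apply_mk_mk (ux u x) (uy u x)
  unfold ClassicallyPHarmonicAt at hpde
  rw [wirtingerZBar_complexGradient hu hsymm, wirtingerZ_complexGradient hu hsymm, ← ofReal_mul,
    conj_complexGradient_div_self]
  unfold secondDeriv at hpde hsymm ⊢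
  rw [hquad, hsymm] at hpde
  congr 1
  rw [div_mul_eq_mul_div, div_ofReal_re]
  simp only [neg_sub, mul_re, add_re, ofReal_re, I_re, mul_zero, ofReal_im, I_im, mul_one,
    sub_self, add_zero, div_ofNat_re, sub_re, re_ofNat, im_ofNat, zero_mul, mul_im, sub_zero,
    add_im, zero_add, div_ofNat_im, sub_im, zero_sub]
  field_simp at hpde ⊢
  linear_combination 2 * hpde

end

/-- **Quasiregularity of the complex gradient** (inequality (2.2) / (K-qr)).
If `u : U → ℝ` (`U ⊂ ℝ²` open) is twice differentiable at `x₀ ∈ U` with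
`∇u(x₀) ≠ 0` and is classically `p`-harmonic at `x₀`, then the complex
gradient `φ = (u_x - i u_y)/2` satisfies the distortion inequality of a
`(p-1)`-quasiregular mapping at `x₀`: `|φ_{z̄}(x₀)| ≤ (1 - 2/p) |φ_z(x₀)|`. -/
theorem complex_gradient_quasiregular (p : ℝ) (hp : 2 < p)
    (U : Set (ℝ × ℝ)) (hU : IsOpen U) (x₀ : ℝ × ℝ) (hx₀ : x₀ ∈ U)
    (u : ℝ × ℝ → ℝ)
    (hdiff : ∀ x ∈ U, DifferentiableAt ℝ u x)
    (hdiff2 : DifferentiableAt ℝ (fderiv ℝ u) x₀)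
    (hgrad : (ux u x₀, uy u x₀) ≠ (0, 0))
    (hpde : ClassicallyPHarmonicAt p u x₀) :
    ‖wirtingerZBar (complexGradient u) x₀‖ ≤
      (1 - 2 / p) * ‖wirtingerZ (complexGradient u) x₀‖ := by
  have hsymm : secondDeriv u x₀ (0, 1) (1, 0) = secondDeriv u x₀ (1, 0) (0, 1) :=
    secondDeriv_comm (eventually_of_mem (hU.mem_nhds hx₀) hdiff) hdiff2 _ _
  exact norm_le_of_mul_eq_neg_re hp.le (norm_conj_div_self_le_one _)
    (hpde.mul_wirtingerZBar_complexGradient hdiff2 hsymm hgrad)
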